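/- Fix f ≥ 1, a prime p, and µ ∈ (Z^2)^f with each µ_i = (a_i, b_i) satisfying 2 ≤ a_i - b_i ≤ p - 2 (µ - η is 1-deep). Define t'_µ : Z^f → (Z^2)^f by the extension-graph formula t'_µ(ω_J + ν) = w̃_J · (µ + ν + ω_J - η) using the p-dot action, and let t_µ be its composition with reduction modulo (p - π)X^0(T), where X^0(T) is the lattice spanned by the determinant characters det∘ι_i and π is the cyclic shift. Then t_µ is injective on Λ_W^µ := {ω ∈ Z^f : t_µ(ω) lies in the lowest restricted alcove C_0 mod (p-π)X^0(T)}. -/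

import Mathlib

namespace ExtGraph

variable (f : ℕ) [NeZero f]

/-- The extension-graph map `t'_µ : Λ_W = ℤ^f → X^*(T) = (ℤ²)^f`, written out explicitly.
Decompose `ω_i = 2c_i + j_i` with `j_i ∈ {0,1}` (so `ω = ω_J + ν` with `i ∈ J ↔ j_i = 1`,
`ν ∈ Λ_R` embedded as `(c_i, -c_i)`).  Then `t'_µ(ω) = w̃_J·(µ + ν + ω_J - η)` for the
`p`-dot action of `w̃_J = w_J t_{-π⁻¹ω_J} ∈ Ω`, which in component `i` is
`(a_i + c_i + j_i - 1, b_i - c_i)` if `i-1 ∉ J`, and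
`(b_i - c_i - 1, a_i + c_i + j_i - p)` if `i-1 ∈ J`. -/
def tprime (p : ℤ) (μ : Fin f → ℤ × ℤ) (ω : Fin f → ℤ) : Fin f → ℤ × ℤ := fun i =>
  let j : ℤ := ω i % 2
  let c : ℤ := ω i / 2
  let a : ℤ := (μ i).1
  let b : ℤ := (μ i).2
  if ω (i - 1) % 2 = 1 then (b - c - 1, a + c + j - p)
  else (a + c + j - 1, b - c)

/-- Congruence modulo the subgroup `(p - π)X^0(T)`, where `X^0(T)` is spanned by the
determinant characters `(1,1)^(i)` and `π` is the cyclic shift:  `λ₁ ≡ λ₂` iff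
`λ₁ - λ₂ = Σ_i m_i (p·(1,1)^(i) - (1,1)^(i+1))`, i.e. componentwise
`λ₁ i - λ₂ i = (p·m_i - m_{i-1})·(1,1)`. -/
def EquivMod (p : ℤ) (l₁ l₂ : Fin f → ℤ × ℤ) : Prop :=
  ∃ m : Fin f → ℤ, ∀ i, l₁ i - l₂ i = (p * m i - m (i - 1), p * m i - m (i - 1))

/-- Membership in the lowest restricted alcove `C_0 = X_1(T) - η`:
`0 ≤ ⟨λ + η, α_i^∨⟩ < p` for all `i`. -/
def InC0 (p : ℤ) (l : Fin f → ℤ × ℤ) : Prop :=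
  ∀ i, 0 ≤ (l i).1 - (l i).2 + 1 ∧ (l i).1 - (l i).2 + 1 < p

/-- `Λ_W^µ = {ω ∈ ℤ^f : t_µ(ω) ∈ C_0 + (p-π)X^0(T)}`. -/
def InLambdaWμ (p : ℤ) (μ : Fin f → ℤ × ℤ) (ω : Fin f → ℤ) : Prop :=
  ∃ l, InC0 f p l ∧ EquivMod f p (tprime f p μ ω) l

/-! Adding the two coordinates of `t'_µ(ω)_i` gives `a_i + b_i + j_i - 1 - p j_{i-1}` with
`j = ω mod 2`. Hence if `t'_µ(ω) - t'_µ(ω') = (p - π)m`, then `2(p m_i - m_{i-1}) = δ_i - p δ_{i-1}`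
for `δ = j - j' ∈ {-1, 0, 1}^f`, so `|p m_i - m_{i-1}| ≤ (p + 1)/2 < p - 1` once `p ≥ 4`, which
1-deepness guarantees. Looking at a maximum and a minimum of `m` shows `m = 0`. Then
`δ_i = p δ_{i-1}` forces `δ = 0`, and on a fixed parity pattern `t'_µ` is visibly injective. -/

theorem le_zero_of_mul_sub_comp_lt {ι : Type*} [Finite ι] (σ : ι → ι) {p : ℤ} (hp : 1 ≤ p)
    (m : ι → ℤ) (h : ∀ i, p * m i - m (σ i) < p - 1) (i : ι) : m i ≤ 0 := by
  have : Nonempty ι := ⟨i⟩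
  obtain ⟨iM, hM⟩ := Finite.exists_max m
  suffices m iM ≤ 0 from (hM i).trans this
  by_contra! hpos
  nlinarith [h iM, hM (σ iM)]

theorem eq_zero_of_abs_mul_sub_comp_lt {ι : Type*} [Finite ι] (σ : ι → ι) {p : ℤ} (hp : 1 ≤ p)
    (m : ι → ℤ) (h : ∀ i, |p * m i - m (σ i)| < p - 1) : m = 0 := by
  funext i
  refine le_antisymm (le_zero_of_mul_sub_comp_lt σ hp m (fun i => (abs_lt.1 (h i)).2) i) ?_
  have := le_zero_of_mul_sub_comp_lt σ hp (-m)
    (fun i => by simp only [Pi.neg_apply]; linarith [(abs_lt.1 (h i)).1]) i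
  simpa using this

theorem tprime_fst_add_snd (p : ℤ) (μ : Fin f → ℤ × ℤ) (ω : Fin f → ℤ) (i : Fin f) :
    (tprime f p μ ω i).1 + (tprime f p μ ω i).2 =
      (μ i).1 + (μ i).2 + ω i % 2 - 1 - p * (ω (i - 1) % 2) := by
  unfold tprime
  rcases Int.emod_two_eq (ω (i - 1)) with h | h <;> simp only [h] <;> norm_num <;> ring

theorem eq_of_tprime_eq (p : ℤ) (μ : Fin f → ℤ × ℤ) {ω ω' : Fin f → ℤ} {i : Fin f}
    (hpar : ω (i - 1) % 2 = ω' (i - 1) % 2) (h : tprime f p μ ω i = tprime f p μ ω' i) :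
    ω i = ω' i := by
  unfold tprime at h
  rw [← hpar] at h
  split_ifs at h <;> simp only [Prod.mk.injEq] at h <;> omega

theorem tmu_injective (p : ℤ)
    (μ : Fin f → ℤ × ℤ)
    (hμ : ∀ i, 2 ≤ (μ i).1 - (μ i).2 ∧ (μ i).1 - (μ i).2 ≤ p - 2)
    (ω ω' : Fin f → ℤ)
    (h : EquivMod f p (tprime f p μ ω) (tprime f p μ ω')) :
    ω = ω' := by
  have hp : 4 ≤ p := by linarith [hμ 0]
  obtain ⟨m, hm⟩ := h
  set δ : Fin f → ℤ := fun i => ω i % 2 - ω' i % 2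
  have hδ : ∀ i, -1 ≤ δ i ∧ δ i ≤ 1 := fun i => by simp only [δ]; omega
  have hdet : ∀ i, 2 * (p * m i - m (i - 1)) = δ i - p * δ (i - 1) := fun i => by
    have := congrArg (fun x : ℤ × ℤ => x.1 + x.2) (hm i)
    simp only [Prod.fst_sub, Prod.snd_sub] at this
    simp only [δ]
    linear_combination this.symm + tprime_fst_add_snd f p μ ω i - tprime_fst_add_snd f p μ ω' i
  have hm0 : m = 0 := eq_zero_of_abs_mul_sub_comp_lt (· - 1) (p := p) (by omega) m fun i =>
    abs_lt.2 ⟨by nlinarith [hdet i, hδ i, hδ (i - 1)], by nlinarith [hdet i, hδ i, hδ (i - 1)]⟩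
  have hδ0 : ∀ i, δ i = 0 := fun i => by
    have hi := hdet i
    simp only [hm0, Pi.zero_apply, mul_zero, sub_zero] at hi
    exact Int.eq_zero_of_abs_lt_dvd (m := p) ⟨δ (i - 1), by linarith⟩
      (abs_lt.2 ⟨by linarith [hδ i], by linarith [hδ i]⟩)
  funext i
  refine eq_of_tprime_eq f p μ (by linarith [hδ0 (i - 1)]) ?_
  exact sub_eq_zero.1 ((hm i).trans (by simp [hm0]))

end ExtGraph
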